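/- arXiv:2509.24839 — 3 statements merged into one kernel-verified Lean document; each statement's English description precedes it below -/
import Mathlib

section
/- For even n and k ≥ 0, the algebraic degree of γ_{2k} : 𝔽₂ⁿ → 𝔽₂ⁿ equals k+1 if k ≤ n/2, and equals n/2 + 1 if k ≥ n/2. -/
open Finset Polynomial

/-- The cyclic left shift on `𝔽₂ⁿ`. -/
def cshift (n : ℕ) (x : Fin n → ZMod 2) : Fin n → ZMod 2 :=
  fun i => x ⟨(i.val + 1) % n, Nat.mod_lt _ (Nat.lt_of_le_of_lt (Nat.zero_le i.val) i.isLt)⟩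

/-- `gamma n k` is the function `γ_{2k} = S^{2k} ⊙ (𝟙+S^{2k-1}) ⊙ … ⊙ (𝟙+S)` on `𝔽₂ⁿ`;
`gamma n 0 = id`. -/
def gamma (n k : ℕ) (x : Fin n → ZMod 2) : Fin n → ZMod 2 :=
  fun i => (cshift n)^[2 * k] x i * ∏ j ∈ Finset.range k, (1 + (cshift n)^[2 * j + 1] x i)

/-- The  indicator vector of a set of coordinates. -/
def indic (n : ℕ) (T : Finset (Fin n)) : Fin n → ZMod 2 := fun i => if i ∈ T then 1 else 0

/-- The coefficient of the monomial  in the algebraic normal form of a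
Boolean function  (Möbius inversion). -/
def anfCoeff (n : ℕ) (g : (Fin n → ZMod 2) → ZMod 2) (T : Finset (Fin n)) : ZMod 2 :=
  ∑ U ∈ T.powerset, g (indic n U)

/-- The multivariate (algebraic) degree of a Boolean function . -/
def boolDeg (n : ℕ) (g : (Fin n → ZMod 2) → ZMod 2) : ℕ :=
  ((Finset.univ : Finset (Finset (Fin n))).filter fun T => anfCoeff n g T ≠ 0).sup Finset.card

/-- The algebraic degree of : the maximum of the degrees of its
coordinate functions. -/
def algDeg (n : ℕ) (f : (Fin n → ZMod 2) → (Fin n → ZMod 2)) : ℕ :=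
  Finset.univ.sup fun i : Fin n => boolDeg n (fun x => f x i)

/-!
Coordinate `i` of `γ_{2k}` is `x_a ∏_{b ∈ B} (1 + x_b)` with `a = i + 2k` and
`B = {i + 1, i + 3, …, i + 2k - 1}` taken modulo `n`; repeated factors may be dropped because
`1 + x_b` is idempotent. Since `n` is even, `a` is not in `B`, and `B` has `min k (n / 2)`
elements. Expanding the product, the algebraic normal form of `x_a ∏_{b ∈ B} (1 + x_b)` is
`∑_{C ⊆ B} x_a x^C`, whose degree is `#B + 1`.
-/

theorem Finset.prod_comp_of_isIdempotentElem {α β M : Type*} [CommMonoid M] [DecidableEq β]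
    (s : Finset α) (e : α → β) (f : β → M) (hf : ∀ b, IsIdempotentElem (f b)) :
    ∏ j ∈ s, f (e j) = ∏ b ∈ s.image e, f b := by
  refine (prod_image' _ fun i hi => ?_).symm
  have hfiber : #{j ∈ s | e j = e i} ≠ 0 := card_ne_zero.2 ⟨i, mem_filter.2 ⟨hi, rfl⟩⟩
  rw [prod_congr rfl fun j hj => congrArg f (mem_filter.1 hj).2, prod_const,
    ← Nat.succ_pred hfiber, (hf _).pow_succ_eq]

theorem Finset.card_filter_powerset_mem_disjoint {α : Type*} [DecidableEq α] {a : α}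
    {B T : Finset α} (haT : a ∈ T) (haB : a ∉ B) :
    #{U ∈ T.powerset | a ∈ U ∧ Disjoint U B} = 2 ^ #(T \ insert a B) := by
  have hinj : Set.InjOn (insert a) ((T \ insert a B).powerset : Set (Finset α)) := by
    intro V hV W hW h
    simp only [coe_powerset, Set.mem_preimage, Set.mem_powerset_iff, coe_subset] at hV hW
    rw [← erase_insert fun h => (mem_sdiff.1 (hV h)).2 (mem_insert_self a B),
      ← erase_insert fun h => (mem_sdiff.1 (hW h)).2 (mem_insert_self a B), h]
  rw [← card_powerset, ← card_image_of_injOn hinj]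
  congr 1
  ext U
  simp only [mem_filter, mem_powerset, mem_image, subset_iff, mem_sdiff, mem_insert,
    disjoint_left]
  constructor
  · rintro ⟨hUT, haU, hUB⟩
    exact ⟨U.erase a, by grind, insert_erase haU⟩
  · rintro ⟨V, hV, rfl⟩
    grind

section AlgebraicNormalForm

variable {n : ℕ}

theorem indic_mul_prod_one_add_indic (a : Fin n) (B U : Finset (Fin n)) :
    indic n U a * ∏ b ∈ B, (1 + indic n U b) = if a ∈ U ∧ Disjoint U B then 1 else 0 := by
  have hfactor : ∀ b, 1 + indic n U b = if b ∉ U then 1 else 0 := fun b => by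
    by_cases hb : b ∈ U <;> simp [indic, hb]; rfl
  simp only [hfactor, prod_boole, disjoint_right]
  by_cases haU : a ∈ U <;> simp [indic, haU]

theorem anfCoeff_mul_prod_one_add {a : Fin n} {B : Finset (Fin n)} (haB : a ∉ B)
    (T : Finset (Fin n)) :
    anfCoeff n (fun x => x a * ∏ b ∈ B, (1 + x b)) T =
      if a ∈ T ∧ T ⊆ insert a B then 1 else 0 := by
  rw [anfCoeff, sum_congr rfl fun U _ => indic_mul_prod_one_add_indic a B U, sum_boole]
  by_cases haT : a ∈ T
  · rw [card_filter_powerset_mem_disjoint haT haB, Nat.cast_pow, Nat.cast_ofNat,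
      show (2 : ZMod 2) = 0 from rfl, zero_pow_eq]
    simp [haT, sdiff_eq_empty_iff_subset]
  · rw [filter_false_of_mem fun U hU h => haT (mem_powerset.1 hU h.1)]
    simp [haT]

theorem boolDeg_mul_prod_one_add {a : Fin n} {B : Finset (Fin n)} (haB : a ∉ B) :
    boolDeg n (fun x => x a * ∏ b ∈ B, (1 + x b)) = #B + 1 := by
  rw [← card_insert_of_notMem haB, boolDeg]
  refine le_antisymm (Finset.sup_le fun T hT => ?_) (le_sup ?_)
  · simp [anfCoeff_mul_prod_one_add haB] at hT
    exact card_le_card hT.2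
  · simp [anfCoeff_mul_prod_one_add haB]

end AlgebraicNormalForm

section Gamma

open Fin.NatCast

variable {n : ℕ} [NeZero n]

theorem iterate_cshift_apply (m : ℕ) (x : Fin n → ZMod 2) (i : Fin n) :
    (cshift n)^[m] x i = x (i + (m : Fin n)) := by
  induction m generalizing i with
  | zero => simp
  | succ m ih =>
    rw [Function.iterate_succ_apply', cshift, ih]
    congr 1
    rw [show (⟨_, _⟩ : Fin n) = i + 1 from Fin.ext (by simp [Fin.val_add])]
    push_cast
    abel

def oddShifts (n k : ℕ) [NeZero n] : Finset (Fin n) :=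
  (range k).image fun j => ((2 * j + 1 : ℕ) : Fin n)

theorem gamma_apply (k : ℕ) (x : Fin n → ZMod 2) (i : Fin n) :
    gamma n k x i = x (i + ((2 * k : ℕ) : Fin n)) *
      ∏ b ∈ (oddShifts n k).map (addLeftEmbedding i), (1 + x b) := by
  have hidem : ∀ y : ZMod 2, (1 + y) * (1 + y) = 1 + y := by decide
  simp only [gamma, iterate_cshift_apply, prod_map, oddShifts]
  rw [← prod_comp_of_isIdempotentElem _ _ (fun b => 1 + x (addLeftEmbedding i b))
    fun b => hidem _]
  rfl

theorem natCast_two_mul_notMem_oddShifts (hn : Even n) (k j : ℕ) :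
    ((2 * k : ℕ) : Fin n) ∉ oddShifts n j := by
  simp only [oddShifts, mem_image, Fin.ext_iff, Fin.val_natCast, not_exists, not_and]
  intro l _ h
  have h1 := Nat.mod_mod_of_dvd (2 * l + 1) hn.two_dvd
  have h2 := Nat.mod_mod_of_dvd (2 * k) hn.two_dvd
  omega

theorem card_oddShifts {m : ℕ} (hnm : n = 2 * m) (k : ℕ) : #(oddShifts n k) = min k m := by
  have hm : 0 < m := by have := NeZero.pos n; omega
  set e : ℕ → Fin n := fun j => ((2 * j + 1 : ℕ) : Fin n)
  have hper : ∀ j, e (j % m) = e j := fun j => Fin.ext <| by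
    have : 2 * j + 1 = 2 * (j % m) + 1 + n * (j / m) := by
      rw [hnm]; have := Nat.mod_add_div j m; linarith
    simp only [e, Fin.val_natCast]
    rw [this, Nat.add_mul_mod_self_left]
  have hinj : Set.InjOn e (range (min k m)) := fun j₁ h₁ j₂ h₂ h => by
    simp only [coe_range, Set.mem_Iio] at h₁ h₂
    have := congrArg Fin.val h
    simp only [e, Fin.val_natCast] at this
    rw [Nat.mod_eq_of_lt (by omega), Nat.mod_eq_of_lt (by omega)] at this
    omega
  have himage : (range k).image e = (range (min k m)).image e := by
    refine Subset.antisymm (fun b hb => ?_)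
      (image_subset_image (range_subset_range.2 (min_le_left k m)))
    obtain ⟨j, hj, rfl⟩ := mem_image.1 hb
    have := Nat.mod_lt j hm
    have := Nat.mod_le j m
    exact mem_image.2 ⟨j % m, mem_range.2 (by simp at hj; omega), hper j⟩
  rw [oddShifts, himage, card_image_of_injOn hinj, card_range]

theorem boolDeg_gamma_apply (hn : Even n) (k : ℕ) (i : Fin n) :
    boolDeg n (fun x => gamma n k x i) = min k (n / 2) + 1 := by
  have hnotMem : i + ((2 * k : ℕ) : Fin n) ∉ (oddShifts n k).map (addLeftEmbedding i) := by
    rw [← addLeftEmbedding_apply, mem_map']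
    exact natCast_two_mul_notMem_oddShifts hn k k
  simp only [gamma_apply]
  rw [boolDeg_mul_prod_one_add hnotMem, card_map,
    card_oddShifts (Nat.two_mul_div_two_of_even hn).symm]

theorem algDeg_gamma (hn : Even n) (k : ℕ) : algDeg n (gamma n k) = min k (n / 2) + 1 := by
  simp only [algDeg, boolDeg_gamma_apply hn]
  exact sup_const univ_nonempty _

end Gamma

theorem stmt_4 (n k : ℕ) (hn : Even n) (hn0 : 0 < n) :
    (k ≤ n / 2 → algDeg n (gamma n k) = k + 1) ∧
    (n / 2 ≤ k → algDeg n (gamma n k) = n / 2 + 1) := by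
  have : NeZero n := .of_pos hn0
  rw [algDeg_gamma hn]
  exact ⟨fun h => by rw [min_eq_left h], fun h => by rw [min_eq_right h]⟩
end

section
/- For even n ≥ 2, the set G_n = {γ_0 + Σ_{i=1}^{n-1} a_i γ_{2i} : a_i ∈ 𝔽₂} is closed under composition, has γ_0 = id as identity, and composition on G_n is commutative; i.e., G_n is an Abelian monoid under composition. -/
open Finset Polynomial

/-!
At a position `i`, `γ_{2s}(x)_i` is `x_{i+2s}` times the indicator that the odd-offset bits
`x_{i+1}, x_{i+3}, …, x_{i+2s-1}` all vanish. For `g = Σ_c b_c γ_{2c}` with `b_0 = 1` this gives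
`γ_{2j} ∘ g = Σ_c b_c γ_{2(j+c)}`: on the support of `x_{i+2s} ∏_{l<t<s} (1 + x_{i+2t+1})`, every
term of `S^{2l+1} g(x)` other than `c = 0` vanishes, so each factor `1 + S^{2l+1} g(x)` of
`γ_{2j}(g(x))` may be replaced by `1 + S^{2l+1} x`, working downwards from `l = j - 1`.
Hence `f ∘ g = Σ_{j,c} a_j b_c γ_{2(j+c)}`, which is symmetric in `f` and `g`.
Since `S^n = id`, `γ_{2s}` depends only on `s mod n/2` once `s ≥ n/2`, which folds the indices
`j + c` back below `n` without producing new multiples of `γ_0`.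
Only `a² = a` in `𝔽₂ⁿ` and the multiplicativity of `S` are used, so the argument is carried out
for an algebra endomorphism `σ` of a ring in which every element is idempotent.
-/

def foldIndex (m s : ℕ) : ℕ :=
  if s < m then s else m + (s - m) % m

theorem foldIndex_lt {m : ℕ} (hm : 0 < m) (s : ℕ) : foldIndex m s < 2 * m := by
  unfold foldIndex
  split_ifs
  · omega
  · have := Nat.mod_lt (s - m) hm
    omega

theorem foldIndex_eq_zero_iff (m s : ℕ) : foldIndex m s = 0 ↔ s = 0 := by
  unfold foldIndex
  split_ifs
  · rfl
  · rcases Nat.eq_zero_or_pos m with rfl | hm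
    · simp
    · omega

section Gamma

variable {k R : Type*} [CommRing k] [CommRing R] [Algebra k R]

theorem mul_one_add_self_eq_zero (hR : ∀ x : R, IsIdempotentElem x) (a : R) :
    a * (1 + a) = 0 := by
  have h2 : a + a = 0 := by
    have := hR (a + a)
    simp only [IsIdempotentElem, add_mul, mul_add, hR a |>.eq] at this
    simpa using this
  rw [mul_add, mul_one, (hR a).eq, h2]

def gammaOf (σ : R →ₐ[k] R) (s : ℕ) (x : R) : R :=
  (σ ^ (2 * s)) x * ∏ t ∈ range s, (1 + (σ ^ (2 * t + 1)) x)

def gammaSum (σ : R →ₐ[k] R) (b : ℕ → k) (K : Finset ℕ) (x : R) : R :=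
  ∑ c ∈ K, b c • gammaOf σ c x

variable (σ : R →ₐ[k] R)

@[simp]
theorem gammaOf_zero (x : R) : gammaOf σ 0 x = x := by
  simp [gammaOf]

theorem pow_apply_gammaOf (r s : ℕ) (x : R) :
    (σ ^ r) (gammaOf σ s x) =
      (σ ^ (r + 2 * s)) x * ∏ t ∈ range s, (1 + (σ ^ (r + (2 * t + 1))) x) := by
  simp only [gammaOf, map_mul, map_prod, map_add, map_one, pow_add, AlgHom.mul_apply]

variable {σ}

theorem mul_pow_apply_gammaOf_eq_zero (hR : ∀ x : R, IsIdempotentElem x) (x : R)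
    {l s c : ℕ} (hls : l < s) (hc : 0 < c) :
    ((σ ^ (2 * s)) x * ∏ t ∈ Ico (l + 1) s, (1 + (σ ^ (2 * t + 1)) x)) *
      (σ ^ (2 * l + 1)) (gammaOf σ c x) = 0 := by
  rw [pow_apply_gammaOf]
  -- Either the prefix contains the factor `1 + w` killing `w = σ^{2(l+c)+1} x`, or
  -- `σ^{2l+1} γ_{2c}` contains the factor `1 + u` killing `u = σ^{2s} x`.
  rcases lt_or_ge (l + c) s with hlc | hlc
  · rw [← mul_prod_erase _ _ (mem_Ico.2 ⟨by omega, hlc⟩ : l + c ∈ Ico (l + 1) s),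
      show 2 * l + 1 + 2 * c = 2 * (l + c) + 1 by ring]
    set w := (σ ^ (2 * (l + c) + 1)) x
    calc _ = (σ ^ (2 * s)) x * (∏ t ∈ (Ico (l + 1) s).erase (l + c), (1 + (σ ^ (2 * t + 1)) x)) *
          (∏ t ∈ range c, (1 + (σ ^ (2 * l + 1 + (2 * t + 1))) x)) * (w * (1 + w)) := by ring
      _ = 0 := by rw [mul_one_add_self_eq_zero hR, mul_zero]
  · rw [← mul_prod_erase _ _ (mem_range.2 (by omega : s - l - 1 < c)),
      show 2 * l + 1 + (2 * (s - l - 1) + 1) = 2 * s by omega]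
    set u := (σ ^ (2 * s)) x
    calc _ = (∏ t ∈ Ico (l + 1) s, (1 + (σ ^ (2 * t + 1)) x)) * (σ ^ (2 * l + 1 + 2 * c)) x *
          (∏ t ∈ (range c).erase (s - l - 1), (1 + (σ ^ (2 * l + 1 + (2 * t + 1))) x)) *
          (u * (1 + u)) := by ring
      _ = 0 := by rw [mul_one_add_self_eq_zero hR, mul_zero]

theorem mul_pow_apply_gammaSum (hR : ∀ x : R, IsIdempotentElem x) {b : ℕ → k} {K : Finset ℕ}
    (hK : 0 ∈ K) (hb : b 0 = 1) (x : R) {l s : ℕ} (hls : l < s) :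
    ((σ ^ (2 * s)) x * ∏ t ∈ Ico (l + 1) s, (1 + (σ ^ (2 * t + 1)) x)) *
        (σ ^ (2 * l + 1)) (gammaSum σ b K x) =
      ((σ ^ (2 * s)) x * ∏ t ∈ Ico (l + 1) s, (1 + (σ ^ (2 * t + 1)) x)) *
        (σ ^ (2 * l + 1)) x := by
  simp only [gammaSum, map_sum, map_smul, mul_sum, mul_smul_comm]
  rw [sum_eq_single_of_mem 0 hK, hb, one_smul, gammaOf_zero]
  intro c _ hc
  rw [mul_pow_apply_gammaOf_eq_zero hR x hls (Nat.pos_of_ne_zero hc), smul_zero]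

theorem gammaOf_eq_mul_prod_gammaSum (hR : ∀ x : R, IsIdempotentElem x) {b : ℕ → k}
    {K : Finset ℕ} (hK : 0 ∈ K) (hb : b 0 = 1) (x : R) {j s : ℕ} (hjs : j ≤ s) :
    (σ ^ (2 * s)) x * (∏ t ∈ Ico j s, (1 + (σ ^ (2 * t + 1)) x)) *
        ∏ l ∈ range j, (1 + (σ ^ (2 * l + 1)) (gammaSum σ b K x)) = gammaOf σ s x := by
  induction j with
  | zero => rw [prod_range_zero, mul_one, ← range_eq_Ico, gammaOf]
  | succ j ih =>
    have hstep := mul_pow_apply_gammaSum (σ := σ) hR hK hb x (show j < s by omega)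
    rw [← ih (by omega), prod_range_succ, prod_eq_prod_Ico_succ_bot (by omega : j < s)]
    linear_combination (∏ l ∈ range j, (1 + (σ ^ (2 * l + 1)) (gammaSum σ b K x))) * hstep

theorem gammaOf_gammaSum (hR : ∀ x : R, IsIdempotentElem x) {b : ℕ → k} {K : Finset ℕ}
    (hK : 0 ∈ K) (hb : b 0 = 1) (j : ℕ) (x : R) :
    gammaOf σ j (gammaSum σ b K x) = ∑ c ∈ K, b c • gammaOf σ (j + c) x := by
  rw [gammaOf]
  nth_rw 1 [gammaSum]
  rw [map_sum, sum_mul]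
  refine sum_congr rfl fun c _ => ?_
  rw [map_smul, smul_mul_assoc, pow_apply_gammaOf,
    ← gammaOf_eq_mul_prod_gammaSum hR hK hb x (Nat.le_add_right j c), prod_Ico_eq_prod_range,
    Nat.add_sub_cancel_left]
  simp only [mul_add, add_assoc]

theorem gammaSum_comp_gammaSum (hR : ∀ x : R, IsIdempotentElem x) (a : ℕ → k) {b : ℕ → k}
    (J : Finset ℕ) {K : Finset ℕ} (hK : 0 ∈ K) (hb : b 0 = 1) (x : R) :
    gammaSum σ a J (gammaSum σ b K x) = ∑ j ∈ J, ∑ c ∈ K, (a j * b c) • gammaOf σ (j + c) x := by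
  rw [gammaSum]
  simp only [gammaOf_gammaSum hR hK hb, smul_sum, smul_smul]

theorem gammaSum_comp_comm (hR : ∀ x : R, IsIdempotentElem x) {a b : ℕ → k} {J K : Finset ℕ}
    (hJ : 0 ∈ J) (hK : 0 ∈ K) (ha : a 0 = 1) (hb : b 0 = 1) :
    gammaSum σ a J ∘ gammaSum σ b K = gammaSum σ b K ∘ gammaSum σ a J := by
  funext x
  simp only [Function.comp_apply, gammaSum_comp_gammaSum hR _ _ hK hb,
    gammaSum_comp_gammaSum hR _ _ hJ ha]
  rw [sum_comm]
  simp only [add_comm, mul_comm]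

theorem gammaOf_add_period {m : ℕ} (hσ : σ ^ (2 * m) = 1) (hR : ∀ x : R, IsIdempotentElem x)
    {s : ℕ} (hs : m ≤ s) : gammaOf σ (s + m) = gammaOf σ s := by
  funext x
  obtain ⟨r, rfl⟩ : ∃ r, s = r + m := ⟨s - m, by omega⟩
  have hper (e : ℕ) : (σ ^ (e + 2 * m)) x = (σ ^ e) x := by rw [pow_add, hσ, mul_one]
  set B := ∏ t ∈ range m, (1 + (σ ^ (2 * (r + t) + 1)) x)
  have hB : ∏ t ∈ range m, (1 + (σ ^ (2 * (r + m + t) + 1)) x) = B :=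
    prod_congr rfl fun t _ => by
      rw [show 2 * (r + m + t) + 1 = 2 * (r + t) + 1 + 2 * m by ring, hper]
  rw [gammaOf, gammaOf, prod_range_add, prod_range_add, hB, mul_assoc _ B, (hR B).eq,
    show 2 * (r + m + m) = 2 * (r + m) + 2 * m by ring, hper]

theorem gammaOf_add_mul_period {m : ℕ} (hσ : σ ^ (2 * m) = 1)
    (hR : ∀ x : R, IsIdempotentElem x) {s : ℕ} (hs : m ≤ s) (q : ℕ) :
    gammaOf σ (s + m * q) = gammaOf σ s := by
  induction q with
  | zero => rw [mul_zero, add_zero]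
  | succ q ih =>
    rw [mul_add_one, ← add_assoc, gammaOf_add_period hσ hR (by omega), ih]

theorem gammaOf_foldIndex {m : ℕ} (hσ : σ ^ (2 * m) = 1) (hR : ∀ x : R, IsIdempotentElem x)
    (s : ℕ) : gammaOf σ (foldIndex m s) = gammaOf σ s := by
  unfold foldIndex
  split_ifs with hs
  · rfl
  · conv_rhs => rw [← Nat.add_sub_of_le (not_lt.1 hs), ← Nat.mod_add_div (s - m) m, ← add_assoc]
    exact (gammaOf_add_mul_period hσ hR (Nat.le_add_right m _) _).symm

theorem sum_smul_gammaOf_eq_gammaSum {m : ℕ} (hσ : σ ^ (2 * m) = 1)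
    (hR : ∀ x : R, IsIdempotentElem x) (hm : 0 < m) {ι : Type*} (S : Finset ι) (e : ι → ℕ)
    (d : ι → k) (x : R) :
    ∑ p ∈ S, d p • gammaOf σ (e p) x =
      gammaSum σ (fun l => ∑ p ∈ S with foldIndex m (e p) = l, d p) (range (2 * m)) x := by
  rw [gammaSum, ← sum_fiberwise_of_maps_to (g := fun p => foldIndex m (e p))
    fun p _ => mem_range.2 (foldIndex_lt hm (e p))]
  refine sum_congr rfl fun l _ => ?_
  rw [sum_smul]
  refine sum_congr rfl fun p hp => ?_
  rw [← (mem_filter.1 hp).2, gammaOf_foldIndex hσ hR]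

def gammaSpan (σ : R →ₐ[k] R) (N : ℕ) : Set (R → R) :=
  {f | ∃ b : ℕ → k, b 0 = 1 ∧ f = gammaSum σ b (range N)}

theorem id_mem_gammaSpan {N : ℕ} (hN : 0 < N) : id ∈ gammaSpan σ N :=
  ⟨fun c => if c = 0 then 1 else 0, if_pos rfl, by
    funext x
    simp [gammaSum, ite_smul, hN]⟩

theorem comp_comm_of_mem_gammaSpan (hR : ∀ x : R, IsIdempotentElem x) {N : ℕ} (hN : 0 < N)
    {f g : R → R} (hf : f ∈ gammaSpan σ N) (hg : g ∈ gammaSpan σ N) : f ∘ g = g ∘ f := by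
  obtain ⟨a, ha, rfl⟩ := hf
  obtain ⟨b, hb, rfl⟩ := hg
  exact gammaSum_comp_comm hR (mem_range.2 hN) (mem_range.2 hN) ha hb

theorem comp_mem_gammaSpan {m : ℕ} (hσ : σ ^ (2 * m) = 1) (hR : ∀ x : R, IsIdempotentElem x)
    (hm : 0 < m) {f g : R → R} (hf : f ∈ gammaSpan σ (2 * m)) (hg : g ∈ gammaSpan σ (2 * m)) :
    f ∘ g ∈ gammaSpan σ (2 * m) := by
  obtain ⟨a, ha, rfl⟩ := hf
  obtain ⟨b, hb, rfl⟩ := hg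
  have h0 : 0 ∈ range (2 * m) := mem_range.2 (by omega)
  refine ⟨fun l => ∑ p ∈ range (2 * m) ×ˢ range (2 * m) with foldIndex m (p.1 + p.2) = l,
    a p.1 * b p.2, ?_, funext fun x => ?_⟩
  · dsimp only
    rw [sum_eq_single_of_mem (0, 0) (by simp [foldIndex_eq_zero_iff, hm]), ha, hb, mul_one]
    intro p hp hp0
    simp only [mem_filter, foldIndex_eq_zero_iff, Nat.add_eq_zero_iff] at hp
    exact absurd (Prod.ext hp.2.1 hp.2.2) hp0
  · rw [Function.comp_apply, gammaSum_comp_gammaSum hR _ _ h0 hb, ← sum_product',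
      sum_smul_gammaOf_eq_gammaSum hσ hR hm _ (fun p : ℕ × ℕ => p.1 + p.2) fun p => a p.1 * b p.2]

end Gamma

def cshiftAlgHom (n : ℕ) : (Fin n → ZMod 2) →ₐ[ZMod 2] (Fin n → ZMod 2) where
  toFun := cshift n
  map_one' := rfl
  map_mul' _ _ := rfl
  map_zero' := rfl
  map_add' _ _ := rfl
  commutes' _ := rfl

@[simp]
theorem coe_cshiftAlgHom (n : ℕ) : ⇑(cshiftAlgHom n) = cshift n := rfl

theorem cshift_iterate_apply {n : ℕ} (r : ℕ) (x : Fin n → ZMod 2) (i : Fin n) :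
    (cshift n)^[r] x i = x ⟨(i + r) % n, Nat.mod_lt _ i.pos⟩ := by
  induction r generalizing i with
  | zero => simp [Nat.mod_eq_of_lt i.isLt]
  | succ r ih =>
    rw [Function.iterate_succ_apply', cshift, ih]
    simp only [Nat.mod_add_mod, Nat.add_right_comm _ 1 r, add_assoc]

theorem cshiftAlgHom_pow_self (n : ℕ) : cshiftAlgHom n ^ n = 1 := by
  ext x i
  simp [cshift_iterate_apply, Nat.mod_eq_of_lt i.isLt]

theorem gamma_eq_gammaOf (n s : ℕ) : gamma n s = gammaOf (cshiftAlgHom n) s := by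
  ext x i
  simp only [gamma, gammaOf, AlgHom.coe_pow, coe_cshiftAlgHom, Pi.mul_apply, prod_apply,
    Pi.add_apply, Pi.one_apply]

theorem isIdempotentElem_zmod_two {ι : Type*} (x : ι → ZMod 2) : IsIdempotentElem x :=
  funext fun i => by
    change x i * x i = x i
    generalize x i = z
    fin_cases z <;> rfl

theorem gammaSpan_cshiftAlgHom {n : ℕ} (hn : 0 < n) :
    gammaSpan (cshiftAlgHom n) n = {f | ∃ a : ℕ → ZMod 2,
      f = fun x => gamma n 0 x + ∑ i ∈ Finset.Ico 1 n, a i • gamma n i x} := by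
  have hsum (a : ℕ → ZMod 2) : gammaSum (cshiftAlgHom n) (Function.update a 0 1) (range n) =
      fun x => gamma n 0 x + ∑ i ∈ Finset.Ico 1 n, a i • gamma n i x := by
    funext x
    rw [gammaSum, sum_range_eq_add_Ico _ hn, Function.update_self, one_smul]
    simp only [gamma_eq_gammaOf]
    congr 1
    exact sum_congr rfl fun i hi => by
      rw [Function.update_of_ne (Nat.one_le_iff_ne_zero.1 (mem_Ico.1 hi).1)]
  ext f
  constructor
  · rintro ⟨b, hb, rfl⟩
    exact ⟨b, by rw [← hsum, Function.update_eq_self_iff.2 hb.symm]⟩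
  · rintro ⟨a, rfl⟩
    exact ⟨Function.update a 0 1, Function.update_self .., (hsum a).symm⟩

theorem stmt_7 (n : ℕ) (hn : Even n) (hn2 : 2 ≤ n)
    (G : Set ((Fin n → ZMod 2) → Fin n → ZMod 2))
    (hG : G = {f | ∃ a : ℕ → ZMod 2,
      f = fun x => gamma n 0 x + ∑ i ∈ Finset.Ico 1 n, a i • gamma n i x}) :
    (∀ f ∈ G, ∀ g ∈ G, f ∘ g ∈ G) ∧
    (id : (Fin n → ZMod 2) → Fin n → ZMod 2) ∈ G ∧
    (∀ f ∈ G, ∀ g ∈ G, f ∘ g = g ∘ f) := by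
  obtain ⟨m, rfl⟩ := even_iff_two_dvd.1 hn
  have hm : 0 < m := by omega
  rw [← gammaSpan_cshiftAlgHom (by omega)] at hG
  subst hG
  exact ⟨fun f hf g hg => comp_mem_gammaSpan (cshiftAlgHom_pow_self _) isIdempotentElem_zmod_two
      hm hf hg, id_mem_gammaSpan (by omega),
    fun f hf g hg => comp_comm_of_mem_gammaSpan isIdempotentElem_zmod_two (by omega) hf hg⟩
end

section
/- Let n be a power of 2 and f = γ_0 + Σ_{i=1}^{n-1} a_i γ_{2i} ∈ G_n. Then f is a permutation of 𝔽₂ⁿ if and only if the number of nonzero coefficients among 1, a_1, …, a_{n-1} is odd. -/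
open Finset Polynomial

/-!
Identify `x ∈ 𝔽₂ⁿ` with its `n`-periodic extension `u : ℕ → 𝔽₂`, on which `γ_{2k}` becomes
`γ_{2k}(u)_i = u_{i+2k} ∏_{j<k} (1 + u_{i+2j+1})`, and let a polynomial `p = ∑ p_k X^k` act on
sequences by `p·u = ∑ p_k γ_{2k}(u)`. From `γ_{2k+2}(u)_i = (1 + u_{i+1}) γ_{2k}(u)_{i+2}` and
`γ_{2k+2}(u)_{i+1} γ_{2m}(u)_{i+2} = 0` one gets `γ_{2k}(b·u) = (X^k b)·u` whenever `b(0) = 1`,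
hence `a·(b·u) = (ab)·u`: composition in `G_n` is multiplication of polynomials.
On `n`-periodic sequences `X^{2n} - X^n` acts by zero.

Write `a = ∑ aᵢ Xⁱ` for the polynomial of `f`; it has an odd number of nonzero coefficients
iff `a(1) = 1`. If so, `X(X + 1)` divides `a - 1`, and for `n = 2^s` Frobenius gives
`X^{2n} - X^n = (X(X + 1))^n ∣ (a - 1)^n = a^n - 1`, so `a^{n-1}` acts as a left inverse of `f`.
If `a(1) = 0`, then `f` maps the vector `(i mod 2)_i` to `0`, like the zero vector.
-/

lemma isIdempotentElem_zmod_two_s11 (z : ZMod 2) : IsIdempotentElem z := by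
  rw [IsIdempotentElem, ← sq, ZMod.pow_card]

lemma odd_card_filter_ne_zero_iff {ι : Type*} (s : Finset ι) (f : ι → ZMod 2) :
    Odd (s.filter (f · ≠ 0)).card ↔ ∑ i ∈ s, f i = 1 := by
  have hf : ∀ i ∈ s.filter (f · ≠ 0), f i = 1 := fun i hi =>
    Fin.eq_one_of_ne_zero _ (mem_filter.mp hi).2
  rw [← sum_filter_ne_zero, sum_congr rfl hf, sum_const, nsmul_one, ZMod.natCast_eq_one_iff_odd]

lemma X_pow_two_mul_sub_X_pow_dvd_pow_sub_one {R : Type*} [CommRing R] [CharP R 2] {P : R[X]}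
    (h0 : P.eval 0 = 1) (h1 : P.eval 1 = 1) (s : ℕ) :
    X ^ (2 * 2 ^ s) - X ^ 2 ^ s ∣ P ^ 2 ^ s - 1 := by
  have hX : X ∣ P - 1 := by
    rw [X_dvd_iff, coeff_sub, coeff_zero_eq_eval_zero, h0, coeff_one_zero, sub_self]
  have hX1 : X - C 1 ∣ P - 1 := by
    rw [dvd_iff_isRoot, IsRoot, eval_sub, h1, eval_one, sub_self]
  have hcop : IsCoprime (X : R[X]) (X - C 1) := ⟨1, -1, by rw [C_1]; ring⟩
  have := pow_dvd_pow_of_dvd (hcop.mul_dvd hX hX1) (2 ^ s)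
  rwa [mul_pow, sub_pow_char_pow, sub_pow_char_pow, C_1, one_pow, mul_sub, mul_one,
    ← pow_add, ← two_mul] at this

section GammaSeq

/-- `γ_{2k}` on sequences; `gamma n k x` is read off it on the `n`-periodic extension of `x`. -/
def gammaSeq (k : ℕ) (u : ℕ → ZMod 2) (i : ℕ) : ZMod 2 :=
  u (i + 2 * k) * ∏ j ∈ range k, (1 + u (i + 2 * j + 1))

variable {u : ℕ → ZMod 2}

@[simp]
lemma gammaSeq_zero : gammaSeq 0 u = u := by
  funext i
  simp [gammaSeq]

lemma gammaSeq_succ (k i : ℕ) :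
    gammaSeq (k + 1) u i = (1 + u (i + 1)) * gammaSeq k u (i + 2) := by
  simp only [gammaSeq, prod_range_succ']
  rw [show i + 2 * (k + 1) = i + 2 + 2 * k by ring]
  simp only [show ∀ j, i + 2 * (j + 1) + 1 = i + 2 + 2 * j + 1 from fun j => by ring]
  ring

lemma gammaSeq_succ_mul_gammaSeq_eq_zero (k m i : ℕ) :
    gammaSeq (k + 1) u (i + 1) * gammaSeq m u (i + 2) = 0 := by
  have boolean : ∀ z : ZMod 2, z * (1 + z) = 0 := by decide
  -- some index `l` contributes `u l` to one factor and `1 + u l` to the other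
  rcases le_or_gt (k + 1) m with hkm | hmk
  · rw [gammaSeq, gammaSeq, ← mul_prod_erase (range m) _ (mem_range.mpr hkm),
      show i + 2 + 2 * k + 1 = i + 1 + 2 * (k + 1) by ring]
    linear_combination (∏ j ∈ range (k + 1), (1 + u (i + 1 + 2 * j + 1))) *
      (u (i + 2 + 2 * m) * ∏ j ∈ (range m).erase k, (1 + u (i + 2 + 2 * j + 1))) *
      boolean (u (i + 1 + 2 * (k + 1)))
  · rw [gammaSeq, gammaSeq, ← mul_prod_erase (range (k + 1)) _ (mem_range.mpr hmk),
      show i + 1 + 2 * m + 1 = i + 2 + 2 * m by ring]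
    linear_combination u (i + 1 + 2 * (k + 1)) *
      (∏ j ∈ (range (k + 1)).erase m, (1 + u (i + 1 + 2 * j + 1))) *
      (∏ j ∈ range m, (1 + u (i + 2 + 2 * j + 1))) * boolean (u (i + 2 + 2 * m))

lemma gammaSeq_add_two_mul {h : ℕ} (hu : Function.Periodic u (2 * h)) (k : ℕ) :
    gammaSeq (k + 2 * h) u = gammaSeq (k + h) u := by
  funext i
  -- the product of `1 + u` over a period is idempotent, so a second period changes nothing
  set g : ℕ → ZMod 2 := fun j => 1 + u (i + 2 * j + 1)
  have hg : ∀ m, ∏ j ∈ range (h + m), g j = (∏ j ∈ range h, g j) * ∏ j ∈ range m, g j := by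
    intro m
    rw [prod_range_add]
    congr 1
    refine prod_congr rfl fun j _ => ?_
    simp only [g, show i + 2 * (h + j) + 1 = i + 2 * j + 1 + 2 * h by ring]
    rw [hu]
  simp only [gammaSeq]
  rw [show i + 2 * (k + 2 * h) = i + 2 * (k + h) + 2 * h by ring, hu]
  change _ * ∏ j ∈ range (k + 2 * h), g j = _ * ∏ j ∈ range (k + h), g j
  rw [show k + 2 * h = h + (h + k) by ring, show k + h = h + k by ring, hg, hg,
    ← mul_assoc (∏ j ∈ range h, g j), isIdempotentElem_zmod_two_s11]

lemma gammaSeq_periodic {n : ℕ} (hu : Function.Periodic u n) (k : ℕ) :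
    Function.Periodic (gammaSeq k u) n := by
  have hu' : ∀ i, u (i + n) = u i := hu
  intro i
  simp only [gammaSeq, add_right_comm _ n, hu']

@[simp]
lemma gammaSeq_zero_right (k : ℕ) : gammaSeq k 0 = 0 := by
  funext i
  simp [gammaSeq]

lemma gammaSeq_natCast (k : ℕ) : gammaSeq k ((↑) : ℕ → ZMod 2) = (↑) := by
  funext i
  have two : (2 : ZMod 2) = 0 := rfl
  have gate : ∀ j, 1 + ((i + 2 * j + 1 : ℕ) : ZMod 2) = i := fun j => by
    push_cast
    linear_combination (1 + j) * two
  rw [gammaSeq, prod_congr rfl fun j _ => gate j, prod_const, card_range, Nat.cast_add,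
    Nat.cast_mul, Nat.cast_ofNat, two, zero_mul, add_zero, ← pow_succ',
    (isIdempotentElem_zmod_two_s11 _).pow_succ_eq]

/-- `gammaPoly u p = ∑ₖ pₖ • gammaSeq k u`. -/
noncomputable def gammaPoly (u : ℕ → ZMod 2) : (ZMod 2)[X] →ₗ[ZMod 2] ℕ → ZMod 2 :=
  lsum fun k => LinearMap.smulRight LinearMap.id (gammaSeq k u)

@[simp]
lemma gammaPoly_monomial (k : ℕ) (c : ZMod 2) :
    gammaPoly u (monomial k c) = c • gammaSeq k u := by
  simp [gammaPoly, sum_monomial_index]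

@[simp]
lemma gammaPoly_one : gammaPoly u 1 = u := by
  rw [← monomial_zero_one, gammaPoly_monomial, one_smul, gammaSeq_zero]

lemma gammaPoly_X_mul (p : (ZMod 2)[X]) (i : ℕ) :
    gammaPoly u (X * p) i = (1 + u (i + 1)) * gammaPoly u p (i + 2) := by
  induction p using Polynomial.induction_on' with
  | add p q hp hq => simp only [mul_add, map_add, Pi.add_apply, hp, hq]
  | monomial k c =>
    simp only [X_mul_monomial, gammaPoly_monomial, Pi.smul_apply, smul_eq_mul, gammaSeq_succ]
    ring

lemma gammaPoly_X_mul_mul_gammaPoly_eq_zero (p q : (ZMod 2)[X]) (i : ℕ) :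
    gammaPoly u (X * p) (i + 1) * gammaPoly u q (i + 2) = 0 := by
  induction p using Polynomial.induction_on' with
  | add p p' hp hp' => simp only [mul_add, map_add, Pi.add_apply, add_mul, hp, hp', add_zero]
  | monomial k c =>
    induction q using Polynomial.induction_on' with
    | add q q' hq hq' => simp only [map_add, Pi.add_apply, mul_add, hq, hq', add_zero]
    | monomial m d =>
      simp only [X_mul_monomial, gammaPoly_monomial, Pi.smul_apply, smul_eq_mul]
      linear_combination c * d * gammaSeq_succ_mul_gammaSeq_eq_zero (u := u) k m i

lemma gammaSeq_gammaPoly {b : (ZMod 2)[X]} (hb : b.coeff 0 = 1) (k : ℕ) :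
    gammaSeq k (gammaPoly u b) = gammaPoly u (X ^ k * b) := by
  obtain ⟨b', hb'⟩ : X ∣ b - 1 := by simp [X_dvd_iff, hb]
  induction k with
  | zero => simp
  | succ k ih =>
    funext i
    have hb_split : gammaPoly u b (i + 1) = u (i + 1) + gammaPoly u (X * b') (i + 1) := by
      rw [show b = 1 + X * b' by rw [← hb']; ring, map_add, gammaPoly_one, Pi.add_apply]
    rw [gammaSeq_succ, ih, hb_split, ← add_assoc, add_mul, gammaPoly_X_mul_mul_gammaPoly_eq_zero,
      add_zero, ← gammaPoly_X_mul, ← mul_assoc, ← pow_succ']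

lemma gammaPoly_gammaPoly {b : (ZMod 2)[X]} (hb : b.coeff 0 = 1) (a : (ZMod 2)[X]) :
    gammaPoly (gammaPoly u b) a = gammaPoly u (a * b) := by
  induction a using Polynomial.induction_on' with
  | add p q hp hq => simp only [map_add, hp, hq, add_mul]
  | monomial k c =>
    rw [gammaPoly_monomial, gammaSeq_gammaPoly hb, ← C_mul_X_pow_eq_monomial, mul_assoc,
      ← smul_eq_C_mul, map_smul]

lemma gammaPoly_periodic {n : ℕ} (hu : Function.Periodic u n) (p : (ZMod 2)[X]) :
    Function.Periodic (gammaPoly u p) n := by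
  induction p using Polynomial.induction_on' with
  | add p q hp hq => simpa only [map_add] using hp.add hq
  | monomial k c => simpa only [gammaPoly_monomial] using (gammaSeq_periodic hu k).smul c

lemma gammaPoly_zero : gammaPoly 0 = 0 := by
  refine LinearMap.ext fun p => ?_
  induction p using Polynomial.induction_on' with
  | add p q hp hq => simp only [map_add, hp, hq]
  | monomial k c => simp

lemma gammaPoly_natCast (p : (ZMod 2)[X]) :
    gammaPoly (↑) p = p.eval 1 • ((↑) : ℕ → ZMod 2) := by
  induction p using Polynomial.induction_on' with
  | add p q hp hq => simp only [map_add, hp, hq, eval_add, add_smul]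
  | monomial k c => simp [gammaSeq_natCast]

lemma gammaPoly_eq_zero_of_dvd {h : ℕ} (hu : Function.Periodic u (2 * h)) {p : (ZMod 2)[X]}
    (hp : X ^ (2 * h) - X ^ h ∣ p) : gammaPoly u p = 0 := by
  obtain ⟨q, rfl⟩ := hp
  induction q using Polynomial.induction_on' with
  | add p q hp hq => simp only [mul_add, map_add, hp, hq, add_zero]
  | monomial k c =>
    rw [sub_mul, X_pow_mul_monomial, X_pow_mul_monomial, map_sub, gammaPoly_monomial,
      gammaPoly_monomial, gammaSeq_add_two_mul hu, sub_self]

lemma gammaPoly_pow_two_pow {s : ℕ} (hu : Function.Periodic u (2 * 2 ^ s)) {P : (ZMod 2)[X]}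
    (h0 : P.eval 0 = 1) (h1 : P.eval 1 = 1) : gammaPoly u (P ^ 2 ^ s) = u := by
  rw [← add_sub_cancel 1 (P ^ 2 ^ s), map_add, gammaPoly_one,
    gammaPoly_eq_zero_of_dvd hu (X_pow_two_mul_sub_X_pow_dvd_pow_sub_one h0 h1 s), add_zero]

end GammaSeq

section Periodize

variable {α : Type*} {n : ℕ} (hn : 0 < n)

def periodize (x : Fin n → α) : ℕ → α := fun m => x ⟨m % n, Nat.mod_lt m hn⟩

lemma periodize_periodic (x : Fin n → α) : Function.Periodic (periodize hn x) n := by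
  intro m
  simp [periodize]

@[simp]
lemma periodize_apply_val (x : Fin n → α) (j : Fin n) : periodize hn x j = x j := by
  simp [periodize, Nat.mod_eq_of_lt j.2]

lemma periodize_injective : Function.Injective (periodize (α := α) hn) := fun x y hxy =>
  funext fun j => by simpa using congrFun hxy j

lemma periodize_natCast_val (h2 : 2 ∣ n) :
    periodize hn (fun j : Fin n => ((j : ℕ) : ZMod 2)) = (↑) := by
  funext m
  change ((m % n : ℕ) : ZMod 2) = m
  exact (ZMod.natCast_eq_natCast_iff' _ _ _).mpr (Nat.mod_mod_of_dvd m h2)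

lemma cshift_iterate_apply_s11 (x : Fin n → ZMod 2) (m : ℕ) (j : Fin n) :
    (cshift n)^[m] x j = periodize hn x (j + m) := by
  induction m generalizing x with
  | zero => simp
  | succ m ih =>
    rw [Function.iterate_succ_apply, ih]
    simp only [periodize, cshift, Nat.mod_add_mod, add_assoc]

lemma gamma_apply_s11 (k : ℕ) (x : Fin n → ZMod 2) (j : Fin n) :
    gamma n k x j = gammaSeq k (periodize hn x) j := by
  simp only [gamma, gammaSeq, cshift_iterate_apply_s11 hn, add_assoc]

lemma periodize_sum_smul_gamma (a : ℕ → ZMod 2) (x : Fin n → ZMod 2) :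
    periodize hn (∑ i ∈ range n, a i • gamma n i x) =
      gammaPoly (periodize hn x) (∑ i ∈ range n, monomial i (a i)) := by
  funext m
  rw [← (gammaPoly_periodic (periodize_periodic hn x) _).map_mod_nat m]
  simp [periodize, Finset.sum_apply, gamma_apply_s11 hn, map_sum]

end Periodize

theorem stmt_11 (n s : ℕ) (hn : n = 2 ^ s) (a : ℕ → ZMod 2) (ha0 : a 0 = 1) :
    Function.Bijective (fun x => ∑ i ∈ Finset.range n, a i • gamma n i x :
        (Fin n → ZMod 2) → Fin n → ZMod 2) ↔
      Odd ((Finset.range n).filter (fun i => a i ≠ 0)).card := by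
  subst hn
  have hn0 : 0 < 2 ^ s := by positivity
  set P : (ZMod 2)[X] := ∑ i ∈ range (2 ^ s), monomial i (a i)
  have hP0 : P.coeff 0 = 1 := by simp [P, coeff_monomial, hn0, ha0]
  have hP1 : P.eval 1 = ∑ i ∈ range (2 ^ s), a i := by simp [P, eval_finsetSum]
  have hF := periodize_sum_smul_gamma hn0 a
  rw [odd_card_filter_ne_zero_iff, ← hP1]
  constructor
  · intro hbij
    by_contra hP1_ne
    obtain ⟨t, rfl⟩ : ∃ t, s = t + 1 := Nat.exists_eq_add_one.mpr <| Nat.pos_of_ne_zero <| by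
      rintro rfl
      simp [hP1, ha0] at hP1_ne
    have hP1_zero : P.eval 1 = 0 := of_not_not ((Fin.eq_one_of_ne_zero _).mt hP1_ne)
    have h : (fun j : Fin (2 ^ (t + 1)) => ((j : ℕ) : ZMod 2)) = 0 :=
      hbij.1 <| periodize_injective hn0 <| by
        rw [hF, hF, periodize_natCast_val hn0 (dvd_pow_self 2 t.succ_ne_zero), gammaPoly_natCast,
          hP1_zero, zero_smul]
        exact (LinearMap.congr_fun gammaPoly_zero P).symm
    simpa using congrFun h ⟨1, Nat.one_lt_two_pow t.succ_ne_zero⟩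
  · intro h1
    have key : ∀ x, gammaPoly (periodize hn0 (∑ i ∈ range (2 ^ s), a i • gamma (2 ^ s) i x))
        (P ^ (2 ^ s - 1)) = periodize hn0 x := fun x => by
      rw [hF, gammaPoly_gammaPoly hP0, ← pow_succ, Nat.sub_add_cancel hn0,
        gammaPoly_pow_two_pow ((periodize_periodic hn0 x).nat_mul 2)
          (by rwa [← coeff_zero_eq_eval_zero]) h1]
    refine Finite.injective_iff_bijective.mp fun x y hxy => periodize_injective hn0 ?_
    rw [← key x, ← key y, hxy]
end
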